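/- arXiv:0801.1760 — 2 statements merged into one kernel-verified Lean document; each statement's English description precedes it below -/
import Mathlib

section
/- Let V be a finite-dimensional complex vector space, n = dim S²V, and F ∈ S⁴V̌ a quartic form whose apolarity map ap_F: S²V → S²V̌, G ↦ P_G(F), is an isomorphism (F is non-degenerate). Let H₁,…,H_n ∈ V̌ be linear forms with [Hᵢ] pairwise distinct, and set D̃ᵢ = P_{Hᵢ²}(F̌) ∈ S²V, where F̌ is the dual quartic (whose apolarity map is the inverse of that of F). If D̃ⱼ(Hᵢ) = 0 for all i ≠ j and D̃ᵢ(Hᵢ) ≠ 0 for all i, then H₁⁴,…,H_n⁴ span a space containing F; in fact there exist nonzero scalars α₁,…,α_n with F = α₁H₁⁴ + ⋯ + α_nH_n⁴. -/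
/-!
Evaluating quadratic forms on `V̌` at `Hᵢ` gives functionals dual, up to the nonzero scalars
`D̃ᵢ(Hᵢ)`, to the `n = dim S²V` forms `D̃ᵢ`; hence the `D̃ᵢ` form a basis of `S²V` and every
`G ∈ S²V` expands as `G = Σᵢ (G(Hᵢ) / D̃ᵢ(Hᵢ)) D̃ᵢ`. Applying the apolarity map of `F`, which sends
`D̃ᵢ` to `Hᵢ²`, gives `P_G(F) = Σᵢ D̃ᵢ(Hᵢ)⁻¹ G(Hᵢ) Hᵢ²`, i.e. `F = Σᵢ D̃ᵢ(Hᵢ)⁻¹ Hᵢ⁴`.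
-/

/-- The square `H²` of a linear form `H ∈ V̌`, viewed as an element of `S²V̌`,
i.e. the quadratic form `x ↦ H(x)²` on `V`. -/
noncomputable def sqForm {V : Type*} [AddCommGroup V] [Module ℂ V]
    (H : Module.Dual ℂ V) : QuadraticForm ℂ V :=
  QuadraticMap.sq.comp H

open Module

namespace QuadraticMap

variable {R M N : Type*} [CommRing R] [AddCommGroup M] [Module R M] [AddCommGroup N] [Module R N]

def applyₗ (x : M) : QuadraticMap R M N →ₗ[R] N where
  toFun Q := Q x
  map_add' _ _ := rfl
  map_smul' _ _ := rfl

@[simp]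
theorem applyₗ_apply (x : M) (Q : QuadraticMap R M N) : applyₗ x Q = Q x := rfl

end QuadraticMap

instance QuadraticForm.finiteDimensional {K M : Type*} [Field K] [Invertible (2 : K)]
    [AddCommGroup M] [Module K M] [FiniteDimensional K M] :
    FiniteDimensional K (QuadraticForm K M) :=
  Module.Finite.of_injective (QuadraticMap.associatedHom (R := K) (M := M) (N := K) K)
    (QuadraticMap.associated_rightInverse K).injective

section DualFamily

variable {K M ι : Type*} [Field K] [AddCommGroup M] [Module K M]

theorem LinearIndependent.of_pairwise_dual_eq_zero_ne_zero (v : ι → M) (φ : ι → Dual K M)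
    (hzero : Pairwise fun i j ↦ φ i (v j) = 0) (hne : ∀ i, φ i (v i) ≠ 0) :
    LinearIndependent K v :=
  .of_pairwise_dual_eq_zero_one v (fun i ↦ (φ i (v i))⁻¹ • φ i)
    (fun i j hij ↦ by simp [hzero hij]) (fun i ↦ by simp [hne i])

theorem eq_sum_dual_div_smul_of_card_eq_finrank [Fintype ι] [FiniteDimensional K M]
    (v : ι → M) (φ : ι → Dual K M) (hzero : Pairwise fun i j ↦ φ i (v j) = 0)
    (hne : ∀ i, φ i (v i) ≠ 0) (hcard : Fintype.card ι = finrank K M) (x : M) :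
    x = ∑ i, (φ i x / φ i (v i)) • v i := by
  have hspan := (LinearIndependent.of_pairwise_dual_eq_zero_ne_zero v φ hzero
    hne).span_eq_top_of_card_eq_finrank' hcard
  obtain ⟨c, rfl⟩ : ∃ c : ι → K, ∑ i, c i • v i = x := by
    rw [← Submodule.mem_span_range_iff_exists_fun, hspan]
    trivial
  refine Finset.sum_congr rfl fun i _ ↦ ?_
  have hcoeff : φ i (∑ j, c j • v j) = c i * φ i (v i) := by
    rw [map_sum, Finset.sum_eq_single i (fun j _ hji ↦ by simp [hzero hji.symm]) (by simp)]
    simp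
  rw [hcoeff, mul_div_cancel_right₀ _ (hne i)]

end DualFamily

theorem stmt8_general {V : Type*} [AddCommGroup V] [Module ℂ V] [FiniteDimensional ℂ V]
    (n : ℕ) (hn : n = Module.finrank ℂ (QuadraticForm ℂ (Module.Dual ℂ V)))
    (apF : QuadraticForm ℂ (Module.Dual ℂ V) →ₗ[ℂ] QuadraticForm ℂ V)
    (H : Fin n → Module.Dual ℂ V)
    (Dt : Fin n → QuadraticForm ℂ (Module.Dual ℂ V))
    (hDt : ∀ i, apF (Dt i) = sqForm (H i))
    (hvan : ∀ i j, i ≠ j → Dt j (H i) = 0)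
    (hnz : ∀ i, Dt i (H i) ≠ 0) :
    ∃ α : Fin n → ℂ, (∀ i, α i ≠ 0) ∧
      ∀ G : QuadraticForm ℂ (Module.Dual ℂ V),
        apF G = ∑ i, α i • (G (H i) • sqForm (H i)) := by
  refine ⟨fun i ↦ (Dt i (H i))⁻¹, fun i ↦ inv_ne_zero (hnz i), fun G ↦ ?_⟩
  have hexpand := eq_sum_dual_div_smul_of_card_eq_finrank Dt (fun i ↦ QuadraticMap.applyₗ (H i))
    hvan hnz (by rw [Fintype.card_fin, hn]) G
  conv_lhs => rw [hexpand]
  simp only [map_sum, map_smul, QuadraticMap.applyₗ_apply, hDt, smul_smul, div_eq_inv_mul]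

/-- Let `V` be a finite-dimensional complex vector space,
`n = dim S²V`, and `F ∈ S⁴V̌` a non-degenerate quartic, recorded through its
apolarity map `apF : S²V → S²V̌`, `G ↦ P_G(F)` (here `S²V` is realized as
quadratic forms on `V̌` and `S²V̌` as quadratic forms on `V`), which is a linear
isomorphism.  Let `H₁, …, Hₙ ∈ V̌` be linear forms with `[Hᵢ]` pairwise
distinct, and let `D̃ᵢ = P_{Hᵢ²}(F̌) ∈ S²V` be determined by the dual quartic:
`apF(D̃ᵢ) = Hᵢ²`.  If `D̃ⱼ(Hᵢ) = 0` for all `i ≠ j` and `D̃ᵢ(Hᵢ) ≠ 0` for all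
`i`, then there are nonzero scalars `αᵢ` with `F = Σ αᵢ Hᵢ⁴`, expressed through
apolarity maps: `P_G(F) = Σᵢ αᵢ G(Hᵢ)·Hᵢ²` for every `G ∈ S²V` (the apolarity
map of `H⁴` being `G ↦ G(H)·H²`). -/
theorem stmt8 {V : Type*} [AddCommGroup V] [Module ℂ V] [FiniteDimensional ℂ V]
    (n : ℕ) (hn : n = Module.finrank ℂ (QuadraticForm ℂ (Module.Dual ℂ V)))
    (apF : QuadraticForm ℂ (Module.Dual ℂ V) →ₗ[ℂ] QuadraticForm ℂ V)
    (hbij : Function.Bijective apF)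
    (H : Fin n → Module.Dual ℂ V)
    (hdist : ∀ i j, i ≠ j → ∀ c : ℂ, H i ≠ c • H j)
    (Dt : Fin n → QuadraticForm ℂ (Module.Dual ℂ V))
    (hDt : ∀ i, apF (Dt i) = sqForm (H i))
    (hvan : ∀ i j, i ≠ j → Dt j (H i) = 0)
    (hnz : ∀ i, Dt i (H i) ≠ 0) :
    ∃ α : Fin n → ℂ, (∀ i, α i ≠ 0) ∧
      ∀ G : QuadraticForm ℂ (Module.Dual ℂ V),
        apF G = ∑ i, α i • (G (H i) • sqForm (H i)) :=
  stmt8_general n hn apF H Dt hDt hvan hnz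
end

section
/- Let V be a finite-dimensional complex vector space, n = dim S²V, F ∈ S⁴V̌, and H₁,…,H_n ∈ V̌ linear forms such that F = Σᵢ αᵢHᵢ⁴ with all αᵢ ≠ 0 and such that the squares H₁²,…,H_n² form a basis of S²V̌. Then the apolarity map S²V → S²V̌, G ↦ P_G(F), is an isomorphism, i.e. F is non-degenerate. -/
open Module QuadraticMap

def LinearEquiv.congrQuadraticMapDomain {R M M' N : Type*} [CommRing R] [AddCommGroup M]
    [Module R M] [AddCommGroup M'] [Module R M'] [AddCommGroup N] [Module R N]
    (e : M ≃ₗ[R] M') : QuadraticMap R M N ≃ₗ[R] QuadraticMap R M' N where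
  toFun Q := Q.comp e.symm.toLinearMap
  invFun Q := Q.comp e.toLinearMap
  map_add' _ _ := rfl
  map_smul' _ _ := rfl
  left_inv Q := by ext; simp
  right_inv Q := by ext; simp

instance QuadraticMap.instFiniteDimensional {K M N : Type*} [Field K] [Invertible (2 : K)]
    [AddCommGroup M] [Module K M] [FiniteDimensional K M] [AddCommGroup N] [Module K N]
    [FiniteDimensional K N] : FiniteDimensional K (QuadraticMap K M N) :=
  .of_injective (associated (R := K)) fun Q Q' h => by
    simpa only [← coe_associatedHom K, toQuadraticMap_associated] using
      congrArg LinearMap.BilinMap.toQuadraticMap h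

section Apolarity

variable {V : Type*} [AddCommGroup V] [Module ℂ V]

theorem associated_sqForm_apply (K : Dual ℂ V) (x y : V) :
    associated (sqForm K) x y = K x * K y := by
  simp [sqForm, associated_sq]

variable [FiniteDimensional ℂ V]

theorem finrank_quadraticForm_dual :
    finrank ℂ (QuadraticForm ℂ (Dual ℂ V)) = finrank ℂ (QuadraticForm ℂ V) :=
  (Module.finBasis ℂ V).toDualEquiv.congrQuadraticMapDomain.symm.finrank_eq

theorem exists_linearMap_sqForm_eq_apply (G : QuadraticForm ℂ (Dual ℂ V)) :
    ∃ φ : QuadraticForm ℂ V →ₗ[ℂ] ℂ, ∀ K, φ (sqForm K) = G K := by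
  let e := Module.finBasis ℂ V
  refine ⟨∑ k, ∑ l, associated G (e.dualBasis k) (e.dualBasis l) •
      (LinearMap.applyₗ (e l) ∘ₗ LinearMap.applyₗ (e k) ∘ₗ associated), fun K => ?_⟩
  calc _ = ∑ k, ∑ l, K (e k) * K (e l) * associated G (e.dualBasis k) (e.dualBasis l) := by
        simp [associated_sqForm_apply, mul_comm]
    _ = associated G K K := by
        rw [← LinearMap.BilinForm.sum_repr_mul_repr_mul e.dualBasis K K]
        simp [Finsupp.sum_fintype, mul_assoc]
    _ = G K := associated_eq_self_apply ℂ G K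

variable {ι : Type*}

theorem eq_zero_of_apply_eq_zero_of_span_sqForm {H : ι → Dual ℂ V}
    (hspan : Submodule.span ℂ (Set.range fun i => sqForm (H i)) = ⊤)
    {G : QuadraticForm ℂ (Dual ℂ V)} (hG : ∀ i, G (H i) = 0) : G = 0 := by
  obtain ⟨φ, hφ⟩ := exists_linearMap_sqForm_eq_apply G
  have hφ_zero : φ = 0 := LinearMap.ext_on_range hspan fun i => by simp [hφ, hG]
  ext K
  simp [← hφ, hφ_zero]

variable [Fintype ι]

@[simps]
noncomputable def apolarityMap (H : ι → Dual ℂ V) (α : ι → ℂ) :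
    QuadraticForm ℂ (Dual ℂ V) →ₗ[ℂ] QuadraticForm ℂ V where
  toFun G := ∑ i, α i • (G (H i) • sqForm (H i))
  map_add' G G' := by simp [add_smul, Finset.sum_add_distrib]
  map_smul' c G := by simp [Finset.smul_sum, smul_smul, mul_left_comm]

theorem apolarityMap_injective {H : ι → Dual ℂ V} {α : ι → ℂ} (hα : ∀ i, α i ≠ 0)
    (hind : LinearIndependent ℂ fun i => sqForm (H i))
    (hspan : Submodule.span ℂ (Set.range fun i => sqForm (H i)) = ⊤) :
    Function.Injective (apolarityMap H α) := by
  refine (injective_iff_map_eq_zero _).mpr fun G hG => ?_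
  have hcoeff := Fintype.linearIndependent_iff.mp hind (fun i => α i * G (H i)) <| by
    simpa only [apolarityMap_apply, mul_smul] using hG
  exact eq_zero_of_apply_eq_zero_of_span_sqForm hspan fun i =>
    (mul_eq_zero.mp (hcoeff i)).resolve_left (hα i)

end Apolarity

theorem stmt9_general {V : Type*} [AddCommGroup V] [Module ℂ V] [FiniteDimensional ℂ V]
    (n : ℕ)
    (H : Fin n → Module.Dual ℂ V) (α : Fin n → ℂ) (hα : ∀ i, α i ≠ 0)
    (hind : LinearIndependent ℂ (fun i => sqForm (H i)))
    (hspan : Submodule.span ℂ (Set.range fun i => sqForm (H i)) = ⊤) :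
    Function.Bijective
      (fun G : QuadraticForm ℂ (Module.Dual ℂ V) =>
        ∑ i, α i • (G (H i) • sqForm (H i))) := by
  show Function.Bijective (apolarityMap H α)
  have hinj := apolarityMap_injective hα hind hspan
  exact ⟨hinj, (LinearMap.injective_iff_surjective_of_finrank_eq_finrank
    finrank_quadraticForm_dual).mp hinj⟩

/-- Let `V` be a finite-dimensional complex vector space,
`n = dim S²V̌`, and `F = Σᵢ αᵢHᵢ⁴ ∈ S⁴V̌` with all `αᵢ ≠ 0`, where the squares
`H₁², …, Hₙ²` form a basis of `S²V̌` (realized as quadratic forms on `V`).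
Then the apolarity map of `F`, namely `G ↦ P_G(F) = Σᵢ αᵢ G(Hᵢ)·Hᵢ²` on
`S²V` (quadratic forms on `V̌`), is an isomorphism: `F` is non-degenerate. -/
theorem stmt9 {V : Type*} [AddCommGroup V] [Module ℂ V] [FiniteDimensional ℂ V]
    (n : ℕ) (hn : n = Module.finrank ℂ (QuadraticForm ℂ V))
    (H : Fin n → Module.Dual ℂ V) (α : Fin n → ℂ) (hα : ∀ i, α i ≠ 0)
    (hind : LinearIndependent ℂ (fun i => sqForm (H i)))
    (hspan : Submodule.span ℂ (Set.range fun i => sqForm (H i)) = ⊤) :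
    Function.Bijective
      (fun G : QuadraticForm ℂ (Module.Dual ℂ V) =>
        ∑ i, α i • (G (H i) • sqForm (H i))) :=
  stmt9_general n H α hα hind hspan
end
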